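/- arXiv:2605.30485 — 6 statements merged into one kernel-verified Lean document; each statement's English description precedes it below -/
import Mathlib

section
/- Let (M_n^θ) be, for each θ, a nonnegative supermartingale-type e-process satisfying Ville's inequality P(sup_n M_n^{θ*} > 1/α) ≤ α under the true parameter θ*. Given integers 1 = n_1 < n_2 < ... and a strictly decreasing sequence α_1 > α_2 > ... tending to 0, define CS_n^* = {θ : M_n^θ ≤ 1/α_{t(n)}} where t(n) is the index t with n ∈ [n_t, n_{t+1}). Then almost surely θ* ∈ CS_n^* for all but finitely many n. -/
/-!
On the event that `M θ* n > 1/α_{t(n)}` for infinitely many `n`, the crossing happens with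
`t(n) ≥ k` for every `k`, so the supremum of `M θ*` exceeds `1/α_k`. By Ville's inequality that
event has probability at most `α_k`, for every `k`, hence probability zero.
-/

open MeasureTheory Filter Topology

lemma tendsto_atTop_of_lt_strictMono_succ {nseq tfun : ℕ → ℕ} (hnseq : StrictMono nseq)
    (htfun : ∀ᶠ n in atTop, n < nseq (tfun n + 1)) : Tendsto tfun atTop atTop := by
  refine tendsto_atTop.2 fun k => ?_
  filter_upwards [htfun, eventually_ge_atTop (nseq k)] with n hlt hge
  exact Nat.lt_succ_iff.1 (hnseq.lt_iff_lt.1 (hge.trans_lt hlt))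

lemma setOf_frequently_lt_subset {Ω : Type*} {X : ℕ → Ω → ℝ} {u : ℕ → ℝ} {c : ℝ}
    (hu : ∀ᶠ n in atTop, c ≤ u n) :
    {ω | ∃ᶠ n in atTop, u n < X n ω} ⊆ {ω | ∃ n, 1 ≤ n ∧ c < X n ω} := by
  intro ω (hω : ∃ᶠ n in atTop, u n < X n ω)
  obtain ⟨n, hlt, hcu, hn⟩ := (hω.and_eventually (hu.and (eventually_ge_atTop 1))).exists
  exact ⟨n, hn, hcu.trans_lt hlt⟩

lemma ae_eventually_le_of_measure_exists_lt_le {Ω : Type*} [MeasurableSpace Ω] {P : Measure Ω}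
    {X : ℕ → Ω → ℝ} {u c : ℕ → ℝ} {ε : ℕ → ENNReal} (hε : Tendsto ε atTop (𝓝 0))
    (hbound : ∀ k, P {ω | ∃ n, 1 ≤ n ∧ c k < X n ω} ≤ ε k)
    (hu : ∀ k, ∀ᶠ n in atTop, c k ≤ u n) :
    ∀ᵐ ω ∂P, ∀ᶠ n in atTop, X n ω ≤ u n := by
  simp only [ae_iff, not_eventually, not_le]
  refine le_antisymm (ge_of_tendsto' hε fun k => ?_) zero_le
  exact (measure_mono (setOf_frequently_lt_subset (hu k))).trans (hbound k)

theorem stmt3_general {Ω Θ : Type*} [MeasurableSpace Ω] (P : Measure Ω)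
    (M : Θ → ℕ → Ω → ℝ) (θstar : Θ)
    (hville : ∀ a ∈ Set.Ioo (0 : ℝ) 1,
      P {ω | ∃ n : ℕ, 1 ≤ n ∧ 1 / a < M θstar n ω} ≤ ENNReal.ofReal a)
    (nseq : ℕ → ℕ) (hnseq : StrictMono nseq)
    (α : ℕ → ℝ) (hαpos : ∀ t, α t ∈ Set.Ioo (0 : ℝ) 1)
    (hαanti : StrictAnti α) (hα0 : Tendsto α atTop (nhds 0))
    (tfun : ℕ → ℕ)
    (htfun : ∀ n, 1 ≤ n → nseq (tfun n) ≤ n ∧ n < nseq (tfun n + 1)) :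
    ∀ᵐ ω ∂P, ∀ᶠ n in atTop, M θstar n ω ≤ 1 / α (tfun n) := by
  have htfun_tendsto : Tendsto tfun atTop atTop :=
    tendsto_atTop_of_lt_strictMono_succ hnseq <|
      (eventually_ge_atTop 1).mono fun n hn => (htfun n hn).2
  refine ae_eventually_le_of_measure_exists_lt_le (c := fun k => 1 / α k)
    (by simpa using ENNReal.tendsto_ofReal hα0) (fun k => hville (α k) (hαpos k)) fun k => ?_
  filter_upwards [htfun_tendsto.eventually_ge_atTop k] with n hk
  exact one_div_le_one_div_of_le (hαpos _).1 (hαanti.antitone hk)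

/-- Almost-sure coverage of the stitched confidence sequence: if `(M n θstar)` satisfies
Ville's inequality and the thresholds `1/α_{t(n)}` increase along a doubling-type schedule,
then a.s. `θ* ∈ CS_n^* = {θ : M n θ ≤ 1/α_{t(n)}}` for all but finitely many `n`. -/
theorem stmt3 {Ω Θ : Type*} [MeasurableSpace Ω] (P : Measure Ω) [IsProbabilityMeasure P]
    (M : Θ → ℕ → Ω → ℝ) (θstar : Θ)
    (hnonneg : ∀ θ n ω, 0 ≤ M θ n ω)
    (hville : ∀ a ∈ Set.Ioo (0 : ℝ) 1,
      P {ω | ∃ n : ℕ, 1 ≤ n ∧ 1 / a < M θstar n ω} ≤ ENNReal.ofReal a)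
    (nseq : ℕ → ℕ) (hnseq : StrictMono nseq) (hn1 : nseq 1 = 1)
    (α : ℕ → ℝ) (hαpos : ∀ t, α t ∈ Set.Ioo (0 : ℝ) 1)
    (hαanti : StrictAnti α) (hα0 : Tendsto α atTop (nhds 0))
    (tfun : ℕ → ℕ)
    (htfun : ∀ n, 1 ≤ n → nseq (tfun n) ≤ n ∧ n < nseq (tfun n + 1)) :
    ∀ᵐ ω ∂P, ∀ᶠ n in atTop, M θstar n ω ≤ 1 / α (tfun n) :=
  stmt3_general P M θstar hville nseq hnseq α hαpos hαanti hα0 tfun htfun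
end

section
/- Under the uniform growth inequality P(∀θ, log M_n^θ ≥ D_n(|θ-θ*|, δ)) ≥ 1-δ with D_n strictly increasing in its first argument with inverse φ_n, and with M_n^{θ*} an e-value under θ*, any minimizer θ̃_n of θ ↦ M_n^θ satisfies P(|θ̃_n - θ*| ≤ φ_n(log(1/α), δ)) ≥ 1 - δ - α for every α, δ ∈ (0,1). -/
/-! On the uniform-growth event, `D(|θ̃ - θ*|) ≤ log M^{θ̃} ≤ log M^{θ*}` because `θ̃` minimizes
`θ ↦ M^θ`. By Markov's inequality the e-value `M^{θ*}` stays below `1/α` outside an event of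
probability at most `α`; there `D(|θ̃ - θ*|) ≤ log (1/α) = D(φ(log (1/α)))`, and monotonicity of `D`
gives `|θ̃ - θ*| ≤ φ(log (1/α))`. A union bound over the two exceptional events concludes. -/

open MeasureTheory Set

lemma Real.log_le_log_of_nonneg_of_one_le {x y : ℝ} (hx : 0 ≤ x) (hxy : x ≤ y) (hy : 1 ≤ y) :
    Real.log x ≤ Real.log y := by
  rcases hx.eq_or_lt with rfl | hx
  · simpa using Real.log_nonneg hy
  · exact Real.log_le_log hx hxy

lemma abs_sub_le_of_growth_of_le {m D : ℝ → ℝ} {θstar θhat c t : ℝ}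
    (hD : StrictMonoOn D (Ici 0)) (ht : 0 ≤ t) (hDt : D t = Real.log c) (hc : 1 ≤ c)
    (hgrowth : D |θhat - θstar| ≤ Real.log (m θhat)) (hm : 0 ≤ m θhat)
    (hmin : m θhat ≤ m θstar) (hle : m θstar ≤ c) :
    |θhat - θstar| ≤ t := by
  refine (hD.le_iff_le (mem_Ici.2 (abs_nonneg _)) ht).1 ?_
  rw [hDt]
  exact hgrowth.trans (Real.log_le_log_of_nonneg_of_one_le hm (hmin.trans hle) hc)

lemma measure_one_div_le_le_ofReal {Ω : Type*} [MeasurableSpace Ω] {μ : Measure Ω}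
    [IsFiniteMeasure μ] {X : Ω → ℝ} (hX : 0 ≤ᵐ[μ] X) (hXint : Integrable X μ)
    (hXle : ∫ ω, X ω ∂μ ≤ 1) {α : ℝ} (hα : 0 < α) :
    μ {ω | 1 / α ≤ X ω} ≤ ENNReal.ofReal α := by
  have hmarkov := (mul_meas_ge_le_integral_of_nonneg hX hXint (1 / α)).trans hXle
  rw [div_mul_eq_mul_div, one_mul, div_le_one hα] at hmarkov
  rw [← ofReal_measureReal (measure_ne_top μ _)]
  exact ENNReal.ofReal_le_ofReal hmarkov

lemma ofReal_sub_le_measure_of_diff_subset {Ω : Type*} [MeasurableSpace Ω] {μ : Measure Ω}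
    {A B C : Set Ω} {a b : ℝ} (hb : 0 ≤ b) (hA : ENNReal.ofReal a ≤ μ A)
    (hB : μ B ≤ ENNReal.ofReal b) (hC : A \ B ⊆ C) :
    ENNReal.ofReal (a - b) ≤ μ C :=
  calc ENNReal.ofReal (a - b) = ENNReal.ofReal a - ENNReal.ofReal b := ENNReal.ofReal_sub _ hb
    _ ≤ μ A - μ B := tsub_le_tsub hA hB
    _ ≤ μ (A \ B) := le_measure_sdiff
    _ ≤ μ C := measure_mono hC

theorem stmt5_general {Ω : Type*} [MeasurableSpace Ω] (P : Measure Ω) [IsProbabilityMeasure P]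
    (Θ : Set ℝ) (θstar : ℝ) (hθstar : θstar ∈ Θ)
    (M : ℝ → Ω → ℝ) (hMnonneg : ∀ θ ω, 0 ≤ M θ ω)
    (hint : Integrable (M θstar) P)
    (hE : ∫ ω, M θstar ω ∂P ≤ 1)
    (D : ℝ → ℝ → ℝ) (φ : ℝ → ℝ → ℝ)
    (δ : ℝ)
    (hDmono : StrictMonoOn (fun x => D x δ) (Set.Ici 0))
    (hφ : ∀ h, 0 ≤ h → 0 ≤ φ h δ ∧ D (φ h δ) δ = h)
    (hUGI : ENNReal.ofReal (1 - δ) ≤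
      P {ω | ∀ θ ∈ Θ, D (|θ - θstar|) δ ≤ Real.log (M θ ω)})
    (est : Ω → ℝ) (hestmem : ∀ ω, est ω ∈ Θ)
    (hmin : ∀ ω, ∀ θ ∈ Θ, M (est ω) ω ≤ M θ ω)
    (α : ℝ) (hα : α ∈ Set.Ioo (0 : ℝ) 1) :
    ENNReal.ofReal (1 - δ - α) ≤
      P {ω | |est ω - θstar| ≤ φ (Real.log (1 / α)) δ} := by
  obtain ⟨hα0, hα1⟩ := hα
  have hc : 1 ≤ 1 / α := one_le_one_div hα0 hα1.le
  obtain ⟨hφ0, hφD⟩ := hφ _ (Real.log_nonneg hc)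
  have hevalue : P {ω | 1 / α ≤ M θstar ω} ≤ ENNReal.ofReal α :=
    measure_one_div_le_le_ofReal (Filter.Eventually.of_forall (hMnonneg θstar)) hint hE hα0
  refine ofReal_sub_le_measure_of_diff_subset hα0.le hUGI hevalue ?_
  rintro ω ⟨hgrowth, hsmall⟩
  exact abs_sub_le_of_growth_of_le (m := (M · ω)) hDmono hφ0 hφD hc
    (hgrowth _ (hestmem ω)) (hMnonneg _ ω) (hmin ω θstar hθstar) (not_le.1 hsmall).le

/-- Master theorem, estimator part: under the uniform growth inequality and the e-value
property at θ*, any ME-estimator satisfies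
`P(|θ̃ - θ*| ≤ φ(log(1/α), δ)) ≥ 1 - δ - α`. -/
theorem stmt5 {Ω : Type*} [MeasurableSpace Ω] (P : Measure Ω) [IsProbabilityMeasure P]
    (Θ : Set ℝ) (θstar : ℝ) (hθstar : θstar ∈ Θ)
    (M : ℝ → Ω → ℝ) (hMnonneg : ∀ θ ω, 0 ≤ M θ ω)
    (hmeas : ∀ θ, Measurable (M θ))
    (hint : Integrable (M θstar) P)
    (hE : ∫ ω, M θstar ω ∂P ≤ 1)
    (D : ℝ → ℝ → ℝ) (φ : ℝ → ℝ → ℝ)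
    (δ : ℝ) (hδ : δ ∈ Set.Ioo (0 : ℝ) 1)
    (hDmono : StrictMonoOn (fun x => D x δ) (Set.Ici 0))
    (hφ : ∀ h, 0 ≤ h → 0 ≤ φ h δ ∧ D (φ h δ) δ = h)
    (hUGI : ENNReal.ofReal (1 - δ) ≤
      P {ω | ∀ θ ∈ Θ, D (|θ - θstar|) δ ≤ Real.log (M θ ω)})
    (est : Ω → ℝ) (hestmem : ∀ ω, est ω ∈ Θ)
    (hmin : ∀ ω, ∀ θ ∈ Θ, M (est ω) ω ≤ M θ ω)
    (α : ℝ) (hα : α ∈ Set.Ioo (0 : ℝ) 1) :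
    ENNReal.ofReal (1 - δ - α) ≤
      P {ω | |est ω - θstar| ≤ φ (Real.log (1 / α)) δ} :=
  stmt5_general P Θ θstar hθstar M hMnonneg hint hE D φ δ hDmono hφ hUGI est hestmem hmin α hα
end

section
/- Let M_n = ∑_{t=1}^n X_t be a square-integrable martingale with respect to a filtration (F_t), with predictable quadratic variation ⟨M⟩_n = ∑_{t=1}^n E[X_t² | F_{t-1}]. If ⟨M⟩_n = o_p(n), i.e., ⟨M⟩_n / n → 0 in probability, then M_n / √n → 0 in probability. -/
/-!
Write `S n = ∑_{t ≤ n} X t` and `⟨S⟩ n` for its predictable quadratic variation, so that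
`S² - ⟨S⟩` is a martingale. Since `⟨S⟩` is predictable and nondecreasing, the first `k ≤ n`
with `⟨S⟩ (k + 1) > b` (or `n` if there is none) is a stopping time `τ` with `⟨S⟩ τ ≤ b`, and
`τ < n` forces `⟨S⟩ n > b`. Optional stopping gives `E[S τ²] = E[⟨S⟩ τ] ≤ b`, so by Chebyshev
`P(S n² ≥ c) ≤ b / c + P(⟨S⟩ n > b)`. With `c = ε² n` and `b = δ ε² n` this bounds
`P(|S n / √n| ≥ ε)` by `δ + P(⟨S⟩ n / n > δ ε²)`, and `δ` is arbitrary.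
-/

open MeasureTheory Filter

namespace MeasureTheory

theorem condExp_sub_condExp_ae_eq_zero {Ω E : Type*} [NormedAddCommGroup E] [NormedSpace ℝ E]
    [CompleteSpace E] {m m0 : MeasurableSpace Ω} {μ : Measure Ω} (hm : m ≤ m0)
    [SigmaFinite (μ.trim hm)] {f : Ω → E} (hf : Integrable f μ) :
    μ[f - μ[f | m] | m] =ᵐ[μ] 0 := by
  filter_upwards [condExp_sub hf integrable_condExp m] with ω h_sub
  rw [h_sub, Pi.sub_apply, condExp_of_stronglyMeasurable hm stronglyMeasurable_condExp
    integrable_condExp, Pi.zero_apply, sub_self]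

theorem Martingale.condExp_sub_ae_eq_zero {Ω ι E : Type*} [Preorder ι] [NormedAddCommGroup E]
    [NormedSpace ℝ E] [CompleteSpace E] {m0 : MeasurableSpace Ω} {μ : Measure Ω}
    [IsFiniteMeasure μ] {ℱ : Filtration ι m0} {f : ι → Ω → E} (hf : Martingale f ℱ μ) {i j : ι}
    (hij : i ≤ j) : μ[f j - f i | ℱ i] =ᵐ[μ] 0 := by
  filter_upwards [condExp_sub (hf.integrable j) (hf.integrable i) (ℱ i), hf.condExp_ae_eq hij]
    with ω h_sub h_eq
  rw [h_sub, Pi.sub_apply, h_eq, condExp_of_stronglyMeasurable (ℱ.le i) (hf.stronglyMeasurable i)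
    (hf.integrable i), Pi.zero_apply, sub_self]

theorem apply_hittingBtwn_succ_le {Ω : Type*} {A : ℕ → Ω → ℝ} {b : ℝ} {ω : Ω} (hA0 : A 0 ω ≤ b)
    (n : ℕ) :
    A (hittingBtwn (fun k ω => A (k + 1) ω) (Set.Ioi b) 0 n ω) ω ≤ b := by
  rcases Nat.eq_zero_or_eq_succ_pred (hittingBtwn (fun k ω => A (k + 1) ω) (Set.Ioi b) 0 n ω)
    with h | h
  · rwa [h]
  · have h_not := notMem_of_lt_hittingBtwn (h ▸ Nat.lt_succ_self _) (Nat.zero_le _)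
    rw [h]
    simpa using h_not

theorem lt_of_hittingBtwn_succ_lt {Ω : Type*} {A : ℕ → Ω → ℝ} {b : ℝ} {ω : Ω} {n : ℕ}
    (hA : Monotone fun k => A k ω)
    (h_hit : hittingBtwn (fun k ω => A (k + 1) ω) (Set.Ioi b) 0 n ω < n) : b < A n ω :=
  (hittingBtwn_mem_set_of_hittingBtwn_lt h_hit).trans_le (hA (Nat.succ_le_of_lt h_hit))

variable {Ω : Type*} [MeasurableSpace Ω] {P : Measure Ω} {ℱ : Filtration ℕ ‹MeasurableSpace Ω›}

theorem Martingale.integral_stoppedValue_eq [IsFiniteMeasure P] {g : ℕ → Ω → ℝ}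
    (hg : Martingale g ℱ P) {τ : Ω → WithTop ℕ} (hτ : IsStoppingTime ℱ τ) {N : ℕ}
    (hτN : ∀ ω, τ ω ≤ N) : ∫ ω, stoppedValue g τ ω ∂P = ∫ ω, g 0 ω ∂P := by
  have h0 : IsStoppingTime ℱ (fun _ => ((0 : ℕ) : WithTop ℕ)) := isStoppingTime_const ℱ 0
  have hle : (fun _ => ((0 : ℕ) : WithTop ℕ)) ≤ τ := fun ω => by simp
  have h_sub := hg.submartingale.expected_stoppedValue_mono h0 hτ hle hτN
  have h_super := hg.neg.submartingale.expected_stoppedValue_mono h0 hτ hle hτN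
  simp only [stoppedValue, Pi.neg_apply, integral_neg, neg_le_neg_iff] at h_sub h_super
  exact le_antisymm h_super h_sub

theorem Martingale.measure_le_sq_le_div_add_measure_lt [IsProbabilityMeasure P]
    {M A : ℕ → Ω → ℝ} (hmart : Martingale (fun n ω => M n ω ^ 2 - A n ω) ℱ P)
    (hA_int : ∀ n, Integrable (A n) P) (hA_pred : Adapted ℱ fun n => A (n + 1))
    (hA_mono : ∀ᵐ ω ∂P, Monotone fun n => A n ω) (hM0 : M 0 = 0) (hA0 : A 0 = 0)
    {b c : ℝ} (hb : 0 ≤ b) (hc : 0 < c) (n : ℕ) :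
    P {ω | c ≤ M n ω ^ 2} ≤ ENNReal.ofReal (b / c) + P {ω | b < A n ω} := by
  set τ : Ω → ℕ := hittingBtwn (fun k ω => A (k + 1) ω) (Set.Ioi b) 0 n
  have hτ : IsStoppingTime ℱ (fun ω => (τ ω : WithTop ℕ)) :=
    hA_pred.isStoppingTime_hittingBtwn measurableSet_Ioi
  have hτn : ∀ ω, (τ ω : WithTop ℕ) ≤ n := fun ω => WithTop.coe_le_coe.2 (hittingBtwn_le ω)
  have hAτ_int : Integrable (fun ω => A (τ ω) ω) P := integrable_stoppedValue ℕ hτ hA_int hτn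
  have hMτ_int : Integrable (fun ω => M (τ ω) ω ^ 2) P :=
    ((integrable_stoppedValue ℕ hτ hmart.integrable hτn).add hAτ_int).congr
      (ae_of_all _ fun ω => sub_add_cancel _ _)
  have hAτ_le : ∀ ω, A (τ ω) ω ≤ b :=
    fun ω => apply_hittingBtwn_succ_le (by simpa [hA0] using hb) n
  have h_opt : ∫ ω, M (τ ω) ω ^ 2 ∂P = ∫ ω, A (τ ω) ω ∂P := by
    have h_eq : ∫ ω, M (τ ω) ω ^ 2 - A (τ ω) ω ∂P = ∫ ω, M 0 ω ^ 2 - A 0 ω ∂P :=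
      hmart.integral_stoppedValue_eq hτ hτn
    rw [integral_sub hMτ_int hAτ_int] at h_eq
    simpa [hM0, hA0, sub_eq_zero] using h_eq
  have h_cheb : P {ω | c ≤ M (τ ω) ω ^ 2} ≤ ENNReal.ofReal (b / c) := by
    have h_markov : c * P.real {ω | c ≤ M (τ ω) ω ^ 2} ≤ b :=
      calc c * P.real {ω | c ≤ M (τ ω) ω ^ 2} ≤ ∫ ω, M (τ ω) ω ^ 2 ∂P :=
            mul_meas_ge_le_integral_of_nonneg (ae_of_all _ fun ω => sq_nonneg _) hMτ_int c
        _ = ∫ ω, A (τ ω) ω ∂P := h_opt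
        _ ≤ ∫ _, b ∂P := integral_mono hAτ_int (integrable_const b) hAτ_le
        _ = b := by simp
    rw [← ofReal_measureReal]
    exact ENNReal.ofReal_le_ofReal ((le_div_iff₀' hc).2 h_markov)
  have h_incl :
      {ω | c ≤ M n ω ^ 2} ≤ᵐ[P] ({ω | c ≤ M (τ ω) ω ^ 2} ∪ {ω | b < A n ω} : Set Ω) := by
    filter_upwards [hA_mono] with ω hω h_sq
    by_cases h_hit : τ ω < n
    · exact Or.inr (lt_of_hittingBtwn_succ_lt hω h_hit)
    · have h_stop : τ ω = n := le_antisymm (hittingBtwn_le ω) (not_lt.1 h_hit)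
      exact Or.inl (show c ≤ M (τ ω) ω ^ 2 by rw [h_stop]; exact h_sq)
  calc P {ω | c ≤ M n ω ^ 2}
      ≤ P ({ω | c ≤ M (τ ω) ω ^ 2} ∪ {ω | b < A n ω}) := measure_mono_ae h_incl
    _ ≤ _ := (measure_union_le _ _).trans (add_le_add h_cheb le_rfl)

theorem tendstoInMeasure_zero_of_measure_le_add {ι : Type*} {l : Filter ι} {f g : ι → Ω → ℝ}
    (hg : TendstoInMeasure P g l 0)
    (hfg : ∀ ε > 0, ∀ η > 0, ∃ δ > 0, ∀ᶠ i in l,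
      P {ω | ε ≤ |f i ω|} ≤ η + P {ω | δ ≤ |g i ω|}) :
    TendstoInMeasure P f l 0 := by
  simp only [tendstoInMeasure_iff_norm, Pi.zero_apply, sub_zero, Real.norm_eq_abs] at hg ⊢
  refine fun ε hε => ENNReal.tendsto_nhds_zero.2 fun η hη => ?_
  obtain ⟨δ, hδ, h_le⟩ := hfg ε hε (η / 2) (ENNReal.half_pos hη.ne')
  filter_upwards [h_le, ENNReal.tendsto_nhds_zero.1 (hg δ hδ) (η / 2) (ENNReal.half_pos hη.ne')]
    with i h_f h_g
  exact h_f.trans ((add_le_add le_rfl h_g).trans_eq (ENNReal.add_halves η))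

noncomputable def predictableQuadVar (P : Measure Ω) (ℱ : Filtration ℕ ‹MeasurableSpace Ω›)
    (X : ℕ → Ω → ℝ) (n : ℕ) : Ω → ℝ :=
  fun ω => ∑ t ∈ Finset.Icc 1 n, (P[fun ω' => X t ω' ^ 2 | ℱ (t - 1)]) ω

section PredictableQuadVar

variable {X : ℕ → Ω → ℝ}

@[simp]
theorem predictableQuadVar_zero : predictableQuadVar P ℱ X 0 = 0 := by
  ext ω
  simp [predictableQuadVar]

theorem predictableQuadVar_succ (n : ℕ) :
    predictableQuadVar P ℱ X (n + 1) =
      predictableQuadVar P ℱ X n + P[fun ω => X (n + 1) ω ^ 2 | ℱ n] := by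
  ext ω
  simp [predictableQuadVar, Finset.sum_Icc_succ_top (Nat.le_add_left 1 n)]

theorem integrable_predictableQuadVar (n : ℕ) : Integrable (predictableQuadVar P ℱ X n) P :=
  integrable_finsetSum _ fun _ _ => integrable_condExp

theorem stronglyMeasurable_predictableQuadVar {n k : ℕ} (hnk : n ≤ k + 1) :
    StronglyMeasurable[ℱ k] (predictableQuadVar P ℱ X n) := by
  refine Finset.stronglyMeasurable_fun_sum _ fun t ht => ?_
  exact stronglyMeasurable_condExp.mono (ℱ.mono (by rw [Finset.mem_Icc] at ht; omega))

theorem ae_monotone_predictableQuadVar :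
    ∀ᵐ ω ∂P, Monotone fun n => predictableQuadVar P ℱ X n ω := by
  have h_nonneg : ∀ᵐ ω ∂P, ∀ t, 0 ≤ (P[fun ω' => X t ω' ^ 2 | ℱ (t - 1)]) ω :=
    ae_all_iff.2 fun t => condExp_nonneg (ae_of_all _ fun ω => sq_nonneg _)
  filter_upwards [h_nonneg] with ω hω m n hmn
  exact Finset.sum_le_sum_of_subset_of_nonneg (Finset.Icc_subset_Icc_right hmn)
    fun t _ _ => hω t

theorem martingale_sq_sub_predictableQuadVar [IsFiniteMeasure P] (hL2 : ∀ t, MemLp (X t) 2 P)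
    (hmart : Martingale (fun n ω => ∑ t ∈ Finset.Icc 1 n, X t ω) ℱ P) :
    Martingale (fun n ω => (∑ t ∈ Finset.Icc 1 n, X t ω) ^ 2 - predictableQuadVar P ℱ X n ω)
      ℱ P := by
  set S : ℕ → Ω → ℝ := fun n ω => ∑ t ∈ Finset.Icc 1 n, X t ω
  have hS_succ : ∀ n, S (n + 1) = S n + X (n + 1) := fun n => by
    ext ω
    simp [S, Finset.sum_Icc_succ_top (Nat.le_add_left 1 n)]
  have hS_L2 : ∀ n, MemLp (S n) 2 P := fun n => memLp_finsetSum _ fun t _ => hL2 t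
  refine martingale_of_condExp_sub_eq_zero_nat
    (fun n => ((hmart.stronglyMeasurable n).pow 2).sub
      (stronglyMeasurable_predictableQuadVar (Nat.le_succ n)))
    (fun n => (hS_L2 n).integrable_sq.sub (integrable_predictableQuadVar n)) fun n => ?_
  have h_incr : P[X (n + 1) | ℱ n] =ᵐ[P] 0 := by
    simpa [hS_succ] using hmart.condExp_sub_ae_eq_zero (Nat.le_succ n)
  have h_split : (fun ω => S (n + 1) ω ^ 2 - predictableQuadVar P ℱ X (n + 1) ω) -
      (fun ω => S n ω ^ 2 - predictableQuadVar P ℱ X n ω) =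
      (fun ω => 2 * S n ω) * X (n + 1) +
        ((fun ω => X (n + 1) ω ^ 2) - P[fun ω => X (n + 1) ω ^ 2 | ℱ n]) := by
    ext ω
    simp only [hS_succ, predictableQuadVar_succ, Pi.sub_apply, Pi.add_apply, Pi.mul_apply]
    ring
  have h_int_cross : Integrable ((fun ω => 2 * S n ω) * X (n + 1)) P :=
    ((hS_L2 n).const_mul 2).integrable_mul (hL2 (n + 1))
  have h_cross : P[(fun ω => 2 * S n ω) * X (n + 1) | ℱ n] =ᵐ[P] 0 := by
    filter_upwards [condExp_mul_of_stronglyMeasurable_left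
      ((hmart.stronglyMeasurable n).const_mul 2) h_int_cross
      ((hL2 (n + 1)).integrable one_le_two), h_incr] with ω h_pull h_zero
    rw [h_pull, Pi.mul_apply, h_zero, Pi.zero_apply, mul_zero]
  rw [h_split]
  filter_upwards [condExp_add h_int_cross
      ((hL2 (n + 1)).integrable_sq.sub integrable_condExp) (ℱ n), h_cross,
    condExp_sub_condExp_ae_eq_zero (ℱ.le n) (hL2 (n + 1)).integrable_sq] with ω h_add h1 h2
  rw [h_add, Pi.add_apply, h1, h2, Pi.zero_apply, add_zero]

end PredictableQuadVar

end MeasureTheory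

/-- If a square-integrable martingale `M_n = ∑_{t=1}^n X_t` has predictable quadratic
variation `⟨M⟩_n = ∑_{t=1}^n E[X_t² | F_{t-1}]` that is `o_p(n)`, then `M_n = o_p(√n)`. -/
theorem stmt11 {Ω : Type*} [MeasurableSpace Ω] (P : Measure Ω) [IsProbabilityMeasure P]
    (ℱ : Filtration ℕ ‹MeasurableSpace Ω›) (X : ℕ → Ω → ℝ)
    (hL2 : ∀ t, MemLp (X t) 2 P)
    (hmart : Martingale (fun n ω => ∑ t ∈ Finset.Icc 1 n, X t ω) ℱ P)
    (Q : ℕ → Ω → ℝ)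
    (hQ : ∀ n ω, Q n ω = ∑ t ∈ Finset.Icc 1 n, (P[fun ω' => (X t ω') ^ 2 | ℱ (t - 1)]) ω)
    (hQo : TendstoInMeasure P (fun n ω => Q n ω / n) atTop 0) :
    TendstoInMeasure P
      (fun n ω => (∑ t ∈ Finset.Icc 1 n, X t ω) / Real.sqrt n) atTop 0 := by
  obtain rfl : Q = predictableQuadVar P ℱ X := funext fun n => funext (hQ n)
  refine tendstoInMeasure_zero_of_measure_le_add hQo fun ε hε η hη => ?_
  obtain ⟨δ, hδ, hδη⟩ : ∃ δ > 0, ENNReal.ofReal δ ≤ η := by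
    obtain ⟨δ, -, hδ0, hδη⟩ := ENNReal.lt_iff_exists_real_btwn.1 hη
    exact ⟨δ, ENNReal.ofReal_pos.1 hδ0, hδη.le⟩
  refine ⟨ε ^ 2 * δ, by positivity, (eventually_gt_atTop 0).mono fun n hn => ?_⟩
  have hn' : (0 : ℝ) < n := Nat.cast_pos.2 hn
  have h_lenglart :=
    (martingale_sq_sub_predictableQuadVar hL2 hmart).measure_le_sq_le_div_add_measure_lt
      integrable_predictableQuadVar
      (fun _ => (stronglyMeasurable_predictableQuadVar le_rfl).measurable)
      ae_monotone_predictableQuadVar (by ext ω; simp) predictableQuadVar_zero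
      (b := ε ^ 2 * δ * n) (c := ε ^ 2 * n) (by positivity) (by positivity) n
  refine (measure_mono fun ω hω => ?_).trans
    (h_lenglart.trans (add_le_add ?_ (measure_mono fun ω hω => ?_)))
  · have h_sq := pow_le_pow_left₀ hε.le hω 2
    rwa [sq_abs, div_pow, Real.sq_sqrt hn'.le, le_div_iff₀ hn'] at h_sq
  · rwa [mul_div_mul_right _ _ hn'.ne', mul_div_cancel_left₀ _ (by positivity)]
  · exact ((le_div_iff₀ hn').2 hω.le).trans (le_abs_self _)
end

section
/- Let x_1,…,x_n ∈ [0,1] be any real numbers with sample mean x̄ = (1/n)∑ x_t. Then the minimax value min_{θ∈[0,1]} sup_{λ∈[-1/(1-θ), 1/θ]} ∑_{t=1}^n log(1 + λ(x_t - θ)) equals 0, and it is attained at θ = x̄ (with optimal λ = 0); that is, the saddle-point ME-estimator of bounded betting is exactly the sample mean. -/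
/-!
Taking `λ = 0` gives objective `0` for every `θ`, so each inner supremum is `≥ 0`.
At `θ = x̄` the deviations `x_t - x̄` sum to zero, so `log (1 + u) ≤ u` bounds the objective
by `λ ∑ (x_t - x̄) = 0` for every admissible `λ`: the inner supremum at `x̄` is exactly `0`.
-/

open Finset Real

namespace Finset

variable {ι : Type*} (s : Finset ι) (x : ι → ℝ)

theorem sum_sub_sum_div_card_eq_zero : ∑ i ∈ s, (x i - (∑ j ∈ s, x j) / #s) = 0 := by
  rcases s.eq_empty_or_nonempty with rfl | hs
  · simp
  · rw [sum_sub_distrib, sum_const, nsmul_eq_mul, mul_div_cancel₀ _ (by simpa using hs.ne_empty),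
      sub_self]

theorem sum_div_card_mem_Icc_zero_one (hx : ∀ i ∈ s, x i ∈ Set.Icc (0 : ℝ) 1) :
    (∑ i ∈ s, x i) / #s ∈ Set.Icc (0 : ℝ) 1 :=
  ⟨div_nonneg (sum_nonneg fun i hi => (hx i hi).1) (Nat.cast_nonneg _),
    div_le_one_of_le₀ (by simpa using sum_le_card_nsmul s x 1 fun i hi => (hx i hi).2)
      (Nat.cast_nonneg _)⟩

theorem sum_log_one_add_mul_le_mul_sum {lam : ℝ} (h : ∀ i ∈ s, 0 < 1 + lam * x i) :
    ∑ i ∈ s, log (1 + lam * x i) ≤ lam * ∑ i ∈ s, x i := by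
  rw [mul_sum]
  exact sum_le_sum fun i hi => by linarith [log_le_sub_one_of_pos (h i hi)]

theorem sum_log_one_add_mul_sub_mean_nonpos {lam : ℝ}
    (h : ∀ i ∈ s, 0 < 1 + lam * (x i - (∑ j ∈ s, x j) / #s)) :
    ∑ i ∈ s, log (1 + lam * (x i - (∑ j ∈ s, x j) / #s)) ≤ 0 := by
  simpa only [sum_sub_sum_div_card_eq_zero, mul_zero] using sum_log_one_add_mul_le_mul_sum s _ h

end Finset

theorem stmt12_general (n : ℕ) (x : ℕ → ℝ)
    (hx : ∀ t ∈ Icc 1 n, x t ∈ Set.Icc (0 : ℝ) 1)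
    (xbar : ℝ) (hxbar : xbar = (∑ t ∈ Icc 1 n, x t) / n)
    (g : ℝ → ℝ → EReal)
    (hg : ∀ θ lam, g θ lam =
      if ∀ t ∈ Icc 1 n, 0 < 1 + lam * (x t - θ) then
        ((∑ t ∈ Icc 1 n, Real.log (1 + lam * (x t - θ)) : ℝ) : EReal)
      else ⊥)
    (Λ : ℝ → Set ℝ)
    (hΛ : ∀ θ, Λ θ = {l : ℝ | ∀ y ∈ Set.Icc (0 : ℝ) 1, 0 ≤ 1 + l * (y - θ)}) :
    IsLeast {v : EReal | ∃ θ ∈ Set.Icc (0 : ℝ) 1, v = ⨆ lam ∈ Λ θ, g θ lam} 0 ∧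
      (⨆ lam ∈ Λ xbar, g xbar lam) = 0 ∧ g xbar 0 = 0 := by
  replace hxbar : xbar = (∑ t ∈ Icc 1 n, x t) / #(Icc 1 n) := by simpa using hxbar
  have hg_zero (θ : ℝ) : g θ 0 = 0 := by simp [hg]
  have hsup_nonneg (θ : ℝ) : 0 ≤ ⨆ lam ∈ Λ θ, g θ lam :=
    le_iSup₂_of_le 0 (by simp [hΛ]) (hg_zero θ).ge
  have hg_mean_nonpos (lam : ℝ) : g xbar lam ≤ 0 := by
    rw [hg]
    split_ifs with h
    · subst hxbar
      exact_mod_cast sum_log_one_add_mul_sub_mean_nonpos _ x h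
    · exact bot_le
  have hsup_mean : (⨆ lam ∈ Λ xbar, g xbar lam) = 0 :=
    le_antisymm (iSup₂_le fun lam _ => hg_mean_nonpos lam) (hsup_nonneg xbar)
  have hmean_mem : xbar ∈ Set.Icc (0 : ℝ) 1 := hxbar ▸ sum_div_card_mem_Icc_zero_one _ x hx
  refine ⟨⟨⟨xbar, hmean_mem, hsup_mean.symm⟩, ?_⟩, hsup_mean, hg_zero xbar⟩
  rintro v ⟨θ, -, rfl⟩
  exact hsup_nonneg θ

/-- The saddle-point ME-estimator of bounded betting is the sample mean: the minimax value
`min_{θ∈[0,1]} sup_{λ∈Λ(θ)} ∑_t log(1 + λ(x_t - θ))` equals `0` and is attained at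
`θ = x̄` (with optimal `λ = 0`).  Here `Λ(θ) = {λ : 1 + λ(y - θ) ≥ 0 for all y ∈ [0,1]}`,
and the objective is valued in `EReal`, being `⊥ = -∞` when some factor is nonpositive. -/
theorem stmt12 (n : ℕ) (hn : 1 ≤ n) (x : ℕ → ℝ)
    (hx : ∀ t ∈ Icc 1 n, x t ∈ Set.Icc (0 : ℝ) 1)
    (xbar : ℝ) (hxbar : xbar = (∑ t ∈ Icc 1 n, x t) / n)
    (g : ℝ → ℝ → EReal)
    (hg : ∀ θ lam, g θ lam =
      if ∀ t ∈ Icc 1 n, 0 < 1 + lam * (x t - θ) then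
        ((∑ t ∈ Icc 1 n, Real.log (1 + lam * (x t - θ)) : ℝ) : EReal)
      else ⊥)
    (Λ : ℝ → Set ℝ)
    (hΛ : ∀ θ, Λ θ = {l : ℝ | ∀ y ∈ Set.Icc (0 : ℝ) 1, 0 ≤ 1 + l * (y - θ)}) :
    IsLeast {v : EReal | ∃ θ ∈ Set.Icc (0 : ℝ) 1, v = ⨆ lam ∈ Λ θ, g θ lam} 0 ∧
      (⨆ lam ∈ Λ xbar, g xbar lam) = 0 ∧ g xbar 0 = 0 :=
  stmt12_general n x hx xbar hxbar g hg Λ hΛ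
end

section
/- Let ψ : (-λ_min, λ_max) → ℝ be a convex function with ψ(0) = 0 whose convex conjugate ψ*(u) = sup_λ {λu - ψ(λ)} is uniquely minimized at u = 0 with ψ*(0) = 0. Let S_n = x_1 + ... + x_n be fixed reals and V_n : ℝ → (0,∞) any positive function of θ. Then the minimizer over θ ∈ ℝ of sup_λ { λ(S_n - nθ) - ψ(λ) V_n(θ) } is θ = S_n / n, the sample mean. -/
/-!
Since `V θ > 0`, substituting `u = (S - nθ) / V θ` gives
`λ (S - nθ) - ψ(λ) V θ = V θ (λ u - ψ(λ))` for every `λ`, so the supremum in `θ` equals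
`ψ*((S - nθ) / V θ) · V θ`. This vanishes at `θ = S/n`, where `u = 0`, and is positive
elsewhere, where `u ≠ 0`.
-/

namespace EReal

theorem galoisConnection_mul_div {b : EReal} (hb : 0 < b) (hb' : b ≠ ⊤) :
    GaloisConnection (· * b) (· / b) :=
  fun _ _ => (le_div_iff_mul_le hb hb').symm

end EReal

theorem biSup_mul_sub_mul_eq_biSup_mul {s : Set ℝ} (ψ : ℝ → ℝ) (w : ℝ) {V : ℝ} (hV : 0 < V) :
    ⨆ l ∈ s, ((l * w - ψ l * V : ℝ) : EReal) =
      (⨆ l ∈ s, ((l * (w / V) - ψ l : ℝ) : EReal)) * V := by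
  rw [(EReal.galoisConnection_mul_div (EReal.coe_pos.2 hV) (EReal.coe_ne_top V)).l_iSup₂]
  refine iSup_congr fun l => iSup_congr fun _ => ?_
  rw [← EReal.coe_mul]
  congr 1
  field_simp

theorem stmt14_general (lmin lmax : ℝ)
    (ψ : ℝ → ℝ)
    (ψstar : ℝ → EReal)
    (hconj : ∀ u : ℝ, ψstar u = ⨆ l ∈ Set.Ioo (-lmin) lmax, ((l * u - ψ l : ℝ) : EReal))
    (hmin0 : ψstar 0 = 0) (huniq : ∀ u : ℝ, u ≠ 0 → 0 < ψstar u)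
    (V : ℝ → ℝ) (hV : ∀ θ, 0 < V θ)
    (n : ℕ) (hn : 1 ≤ n) (S : ℝ)
    (G : ℝ → EReal)
    (hG : ∀ θ, G θ = ⨆ l ∈ Set.Ioo (-lmin) lmax,
      ((l * (S - n * θ) - ψ l * V θ : ℝ) : EReal)) :
    G (S / n) = 0 ∧ ∀ θ : ℝ, θ ≠ S / n → G (S / n) < G θ := by
  have hn' : (n : ℝ) ≠ 0 := by positivity
  have hGψ : ∀ θ, G θ = ψstar ((S - n * θ) / V θ) * V θ := fun θ => by
    rw [hG, hconj, biSup_mul_sub_mul_eq_biSup_mul ψ _ (hV θ)]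
  have hGmean : G (S / n) = 0 := by
    rw [hGψ, mul_div_cancel₀ S hn', sub_self, zero_div, hmin0, zero_mul]
  refine ⟨hGmean, fun θ hθ => ?_⟩
  have hu : (S - n * θ) / V θ ≠ 0 := by
    refine div_ne_zero (fun h => hθ ?_) (hV θ).ne'
    rw [eq_div_iff hn']
    linarith
  rw [hGmean, hGψ]
  exact EReal.mul_pos (huniq _ hu) (EReal.coe_pos.2 (hV θ))

/-- Sub-ψ saddle point: if ψ is convex with ψ(0) = 0 and its conjugate
`ψ*(u) = sup_λ (λu - ψ(λ))` is uniquely minimized at `0` with `ψ*(0) = 0`, then for any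
positive variance function `V`, the map `θ ↦ sup_λ (λ(S - nθ) - ψ(λ)V(θ))` is uniquely
minimized at the sample mean `θ = S/n`, where the minimum value is `0`. -/
theorem stmt14 (lmin lmax : ℝ) (h0mem : (0 : ℝ) ∈ Set.Ioo (-lmin) lmax)
    (ψ : ℝ → ℝ) (hψconv : ConvexOn ℝ (Set.Ioo (-lmin) lmax) ψ) (hψ0 : ψ 0 = 0)
    (ψstar : ℝ → EReal)
    (hconj : ∀ u : ℝ, ψstar u = ⨆ l ∈ Set.Ioo (-lmin) lmax, ((l * u - ψ l : ℝ) : EReal))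
    (hmin0 : ψstar 0 = 0) (huniq : ∀ u : ℝ, u ≠ 0 → 0 < ψstar u)
    (V : ℝ → ℝ) (hV : ∀ θ, 0 < V θ)
    (n : ℕ) (hn : 1 ≤ n) (S : ℝ)
    (G : ℝ → EReal)
    (hG : ∀ θ, G θ = ⨆ l ∈ Set.Ioo (-lmin) lmax,
      ((l * (S - n * θ) - ψ l * V θ : ℝ) : EReal)) :
    G (S / n) = 0 ∧ ∀ θ : ℝ, θ ≠ S / n → G (S / n) < G θ :=
  stmt14_general lmin lmax ψ ψstar hconj hmin0 huniq V hV n hn S G hG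
end

section
/- For σ² > 0 and 0 < β < 2/σ², define v_β = σ²(5 − 6βσ² + 2β²σ⁴)/(2 − βσ²)². Then v_β ≥ σ² with equality if and only if β = 1/σ², and v_β → (5/4)σ² as β → 0⁺. -/
open Filter Topology

/-- `v_β / σ²` as a function of `u = βσ²`. -/
noncomputable def relEfficiency (u : ℝ) : ℝ := (5 - 6 * u + 2 * u ^ 2) / (2 - u) ^ 2

theorem relEfficiency_sub_one {u : ℝ} (hu : u ≠ 2) :
    relEfficiency u - 1 = (u - 1) ^ 2 / (2 - u) ^ 2 := by
  have : (2 - u) ^ 2 ≠ 0 := pow_ne_zero 2 (sub_ne_zero.mpr hu.symm)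
  rw [relEfficiency, div_sub_one this]
  ring

theorem one_le_relEfficiency {u : ℝ} (hu : u ≠ 2) : 1 ≤ relEfficiency u := by
  have hnonneg : 0 ≤ (u - 1) ^ 2 / (2 - u) ^ 2 := by positivity
  linarith [relEfficiency_sub_one hu]

theorem relEfficiency_eq_one_iff {u : ℝ} (hu : u ≠ 2) : relEfficiency u = 1 ↔ u = 1 := by
  rw [← sub_eq_zero, relEfficiency_sub_one hu, div_eq_zero_iff, sq_eq_zero_iff, sq_eq_zero_iff,
    sub_eq_zero, sub_eq_zero, or_iff_left (Ne.symm hu)]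

theorem tendsto_relEfficiency_zero : Tendsto relEfficiency (𝓝 0) (𝓝 (5 / 4)) := by
  have hcont : ContinuousAt relEfficiency 0 := by
    unfold relEfficiency
    exact ContinuousAt.div (by fun_prop) (by fun_prop) (by norm_num)
  convert hcont.tendsto using 2
  norm_num [relEfficiency]

/-- Properties of the asymptotic variance `v_β = σ²(5 - 6βσ² + 2β²σ⁴)/(2 - βσ²)²` for
`0 < β < 2/σ²`: it is at least `σ²`, with equality iff `β = 1/σ²`, and it tends to
`(5/4)σ²` as `β → 0⁺`. -/
theorem stmt18 (σ2 : ℝ) (hσ : 0 < σ2) (v : ℝ → ℝ)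
    (hv : ∀ β, v β = σ2 * (5 - 6 * β * σ2 + 2 * β ^ 2 * σ2 ^ 2) / (2 - β * σ2) ^ 2) :
    (∀ β ∈ Set.Ioo (0 : ℝ) (2 / σ2), σ2 ≤ v β ∧ (v β = σ2 ↔ β = 1 / σ2)) ∧
      Tendsto v (nhdsWithin 0 (Set.Ioi 0)) (nhds ((5 / 4) * σ2)) := by
  have hv' : v = fun β => σ2 * relEfficiency (β * σ2) := by
    funext β
    rw [hv, relEfficiency]
    ring
  subst hv'
  refine ⟨fun β hβ => ?_, ?_⟩
  · have hu : β * σ2 ≠ 2 := ((lt_div_iff₀ hσ).mp hβ.2).ne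
    refine ⟨le_mul_of_one_le_right hσ.le (one_le_relEfficiency hu), ?_⟩
    rw [mul_eq_left₀ hσ.ne', relEfficiency_eq_one_iff hu, eq_div_iff hσ.ne']
  · have hu : Tendsto (fun β : ℝ => β * σ2) (𝓝 0) (𝓝 0) := by
      simpa using (continuous_mul_const σ2).tendsto 0
    rw [mul_comm]
    exact ((tendsto_relEfficiency_zero.comp hu).const_mul σ2).mono_left nhdsWithin_le_nhds
end
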